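/- Let L be convolution with an even, 2π-periodic, integrable kernel K_P that is strictly decreasing on (0,π). Suppose φ ∈ C¹(𝕋) is a nontrivial, even, 2π-periodic solution of (μ−φ)φ′ = Lφ′ which is nonincreasing on (0,π). Then φ′(x) < 0 and φ(x) < μ for every x ∈ (0,π). -/

import Mathlib

/-!
Differentiating the hypotheses, `φ'` is continuous, odd, `2π`-periodic and `≤ 0` on `(0, π)`, and
it is negative somewhere there because it does not vanish identically. By oddness,
`Lφ'(x) = ∫₀^π (K(x - y) - K(x + y)) φ'(y) dy`. For `x, y ∈ (0, π)` the point `|x - y|` lies closer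
to `0` than `x + y` folded back into `[0, π]`, so the kernel difference is positive except at
`y = x` and `y = π - x`. Hence `(μ - φ x) φ'(x) = Lφ'(x) < 0`, which forces `φ'(x) < 0` and then
`φ x < μ`.
-/

open MeasureTheory Real Set Function

theorem Function.Even.odd_deriv {φ : ℝ → ℝ} (hφ : φ.Even) : (deriv φ).Odd := fun y => by
  simpa [show (fun t => φ (-t)) = φ from funext hφ] using deriv_comp_neg (f := φ) (x := -y)

theorem Function.Periodic.deriv {φ : ℝ → ℝ} {c : ℝ} (hφ : Periodic φ c) : Periodic (deriv φ) c :=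
  fun y => by rw [← deriv_comp_add_const, show (fun t => φ (t + c)) = φ from funext hφ]

theorem Function.Odd.eq_zero_of_periodic_of_eqOn_Ioo {f : ℝ → ℝ} {a : ℝ} (hodd : f.Odd)
    (hper : Periodic f (2 * a)) (ha : 0 < a) (h : ∀ y ∈ Ioo 0 a, f y = 0) (y : ℝ) : f y = 0 := by
  obtain ⟨z, hz, hyz⟩ := hper.exists_mem_Ico (by positivity) y (-a)
  rw [hyz]
  rcases hz.1.eq_or_lt with rfl | hz₁
  · have : f a = f (-a) := by simpa [two_mul] using hper (-a)
    linarith [hodd a]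
  rcases lt_trichotomy z 0 with hz₀ | rfl | hz₀
  · rw [← neg_neg z, hodd, h (-z) ⟨by linarith, by linarith⟩, neg_zero]
  · exact hodd.map_zero
  · exact h z ⟨hz₀, by linarith [hz.2]⟩

theorem Function.Even.apply_abs {K : ℝ → ℝ} (hK : K.Even) (z : ℝ) : K |z| = K z := by
  rcases abs_choice z with h | h <;> rw [h]
  exact hK z

theorem kernel_add_lt_kernel_sub {K : ℝ → ℝ} {a x y : ℝ} (hKeven : K.Even)
    (hKper : Periodic K (2 * a)) (hKdec : StrictAntiOn K (Ioo 0 a)) (hx : x ∈ Ioo 0 a)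
    (hy : y ∈ Ioo 0 a) (hyx : y ≠ x) (hxy : x + y ≠ a) : K (x + y) < K (x - y) := by
  obtain ⟨hx₀, hxa⟩ := hx
  obtain ⟨hy₀, hya⟩ := hy
  have habs : |x - y| ∈ Ioo 0 a :=
    ⟨abs_pos.2 (sub_ne_zero.2 hyx.symm), abs_sub_lt_iff.2 ⟨by linarith, by linarith⟩⟩
  rw [← hKeven.apply_abs (x - y)]
  rcases hxy.lt_or_gt with hlt | hgt
  · exact hKdec habs ⟨by linarith, hlt⟩ (abs_sub_lt_iff.2 ⟨by linarith, by linarith⟩)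
  · -- `x + y` is reflected into `(0, a)` as `2a - (x + y)`
    rw [← hKper.sub_eq, ← hKeven, neg_sub]
    exact hKdec habs ⟨by linarith, by linarith⟩ (abs_sub_lt_iff.2 ⟨by linarith, by linarith⟩)

theorem intervalIntegral.integral_neg_to_self_eq_integral_add_comp_neg {F : ℝ → ℝ} {a : ℝ}
    (hF : IntervalIntegrable F volume (-a) a) :
    ∫ y in -a..a, F y = ∫ y in 0..a, (F y + F (-y)) := by
  have hleft : IntervalIntegrable F volume (-a) 0 :=
    hF.mono_set (uIcc_subset_uIcc_left (by rcases le_total 0 a with h | h <;> simp [h]))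
  have hright : IntervalIntegrable F volume 0 a :=
    hF.mono_set (uIcc_subset_uIcc_right (by rcases le_total 0 a with h | h <;> simp [h]))
  have hneg : IntervalIntegrable (fun y => F (-y)) volume 0 a := by
    simpa using ((IntervalIntegrable.iff_comp_neg).1 hleft).symm
  rw [← integral_add_adjacent_intervals hleft hright, integral_add hright hneg,
    integral_comp_neg, neg_zero, add_comm]

theorem integral_kernel_mul_odd_eq {K f : ℝ → ℝ} {a x : ℝ} (hf : f.Odd)
    (hint : IntervalIntegrable (fun y => K (x - y) * f y) volume (-a) a) :
    ∫ y in -a..a, K (x - y) * f y = ∫ y in 0..a, (K (x - y) - K (x + y)) * f y := by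
  rw [intervalIntegral.integral_neg_to_self_eq_integral_add_comp_neg hint]
  congr 1 with y
  rw [sub_neg_eq_add, hf y]
  ring

theorem integral_kernel_mul_odd_neg {K f : ℝ → ℝ} {a x : ℝ} (hKeven : K.Even)
    (hKper : Periodic K (2 * a)) (hKint : IntervalIntegrable K volume (-a) a)
    (hKdec : StrictAntiOn K (Ioo 0 a)) (hf : Continuous f) (hfodd : f.Odd)
    (hf_nonpos : ∀ y ∈ Ioo 0 a, f y ≤ 0) (hf_neg : ∃ y ∈ Ioo 0 a, f y < 0) (hx : x ∈ Ioo 0 a) :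
    ∫ y in -a..a, K (x - y) * f y < 0 := by
  have ha : 0 < a := hx.1.trans hx.2
  have hK (b c : ℝ) : IntervalIntegrable K volume b c :=
    hKper.intervalIntegrable (t := -a) (by positivity) (by rwa [show -a + 2 * a = a by ring]) b c
  have hKsub (b c : ℝ) : IntervalIntegrable (fun y => K (x - y)) volume b c := by
    simpa using (hK (x - b) (x - c)).comp_sub_left x
  have hKadd (b c : ℝ) : IntervalIntegrable (fun y => K (x + y)) volume b c := by
    simpa using (hK (x + b) (x + c)).comp_add_left x
  rw [integral_kernel_mul_odd_eq hfodd ((hKsub _ _).mul_continuousOn hf.continuousOn), ← neg_pos,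
    ← intervalIntegral.integral_neg]
  have hsign : ∀ y ∈ Ioo 0 a, y ∉ ({x, a - x} : Set ℝ) →
      0 < K (x - y) - K (x + y) := fun y hy hyx => by
    simp only [mem_insert_iff, mem_singleton_iff, not_or] at hyx
    exact sub_pos.2 (kernel_add_lt_kernel_sub hKeven hKper hKdec hx hy hyx.1
      fun h => hyx.2 (by linarith))
  have hnull : volume ({x, a - x} : Set ℝ) = 0 := (toFinite _).measure_zero _
  rw [intervalIntegral.integral_pos_iff_support_of_nonneg_ae']
  · refine ⟨ha, ?_⟩
    have hU : 0 < volume (Ioo 0 a ∩ {y | f y < 0}) := by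
      obtain ⟨y, hy, hfy⟩ := hf_neg
      exact (isOpen_Ioo.inter (isOpen_lt hf continuous_const)).measure_pos _ ⟨y, hy, hfy⟩
    refine (measure_sdiff_null hnull ▸ hU).trans_le (measure_mono ?_)
    rintro y ⟨⟨hy, hfy⟩, hyx⟩
    exact ⟨neg_ne_zero.2 (mul_neg_of_pos_of_neg (hsign y hy hyx) hfy).ne, Ioo_subset_Ioc_self hy⟩
  · rw [uIoc_of_le ha.le, ← Measure.restrict_congr_set Ioo_ae_eq_Ioc]
    filter_upwards [ae_restrict_mem measurableSet_Ioo,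
      ae_restrict_of_ae (measure_eq_zero_iff_ae_notMem.1 hnull)] with y hy hyx
    exact neg_nonneg.2 (mul_nonpos_of_nonneg_of_nonpos (hsign y hy hyx).le (hf_nonpos y hy))
  · exact (((hKsub _ _).sub (hKadd _ _)).mul_continuousOn hf.continuousOn).neg

/-- A nontrivial, even, periodic `C¹` solution which is nonincreasing on `(0,π)` is
strictly decreasing there and stays strictly below the wave speed. -/
theorem strict_decrease_below_speed
    (KP φ : ℝ → ℝ) (μ : ℝ)
    (hKeven : ∀ x, KP (-x) = KP x)
    (hKper : Function.Periodic KP (2 * π))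
    (hKint : IntegrableOn KP (Set.Icc (-π) π))
    (hKdec : StrictAntiOn KP (Set.Ioo 0 π))
    (hφC1 : ContDiff ℝ 1 φ)
    (hφeven : ∀ x, φ (-x) = φ x)
    (hφper : Function.Periodic φ (2 * π))
    (hφnontriv : ¬ (∀ x, deriv φ x = 0))
    (hφmono : AntitoneOn φ (Set.Ioo 0 π))
    (heq : ∀ x, (μ - φ x) * deriv φ x
      = ∫ y in Set.Icc (-π) π, KP (x - y) * deriv φ y) :
    ∀ x ∈ Set.Ioo 0 π, deriv φ x < 0 ∧ φ x < μ := by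
  have hodd : (deriv φ).Odd := Function.Even.odd_deriv hφeven
  have hnonpos : ∀ y ∈ Ioo 0 π, deriv φ y ≤ 0 := fun y hy =>
    derivWithin_of_isOpen (f := φ) isOpen_Ioo hy ▸ hφmono.derivWithin_nonpos
  have hneg : ∃ y ∈ Ioo 0 π, deriv φ y < 0 := by
    by_contra! h
    exact hφnontriv (hodd.eq_zero_of_periodic_of_eqOn_Ioo hφper.deriv pi_pos
      fun y hy => (hnonpos y hy).antisymm (h y hy))
  have hπ : -π ≤ π := neg_le_self pi_pos.le
  intro x hx
  have hL : (μ - φ x) * deriv φ x < 0 := by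
    rw [heq, integral_Icc_eq_integral_Ioc, ← intervalIntegral.integral_of_le hπ]
    exact integral_kernel_mul_odd_neg hKeven hKper
      ((intervalIntegrable_iff_integrableOn_Icc_of_le hπ).2 hKint) hKdec
      (hφC1.continuous_deriv le_rfl) hodd hnonpos hneg hx
  have hdx : deriv φ x < 0 := (hnonpos x hx).lt_of_ne fun h => by simp [h] at hL
  exact ⟨hdx, sub_pos.1 (pos_of_mul_neg_left hL hdx.le)⟩
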